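/- The conditions d ≤ 0, 0 ≤ b+c ≤ 2+2d, −2d ≤ b−c ≤ 2, bc−c²−2d ≥ 0, and bc+2d+c²−2c ≤ 0 together imply −d ≤ b ≤ 2+d and −1 ≤ c ≤ 1+2d. -/
import Mathlib


/-- The Theorem 2 sufficient conditions imply −d ≤ b ≤ 2+d and −1 ≤ c ≤ 1+2d. -/
theorem stmt17 (b c d : ℝ) (hd : d ≤ 0)
    (h1 : 0 ≤ b + c) (h2 : b + c ≤ 2 + 2 * d)
    (h3 : -2 * d ≤ b - c) (h4 : b - c ≤ 2)
    (h5 : 0 ≤ b * c - c ^ 2 - 2 * d)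
    (h6 : b * c + 2 * d + c ^ 2 - 2 * c ≤ 0) :
    (-d ≤ b ∧ b ≤ 2 + d) ∧ (-1 ≤ c ∧ c ≤ 1 + 2 * d) := by
  exact ⟨⟨by linarith, by linarith⟩, by linarith, by linarith⟩
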